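/- Let μ = inf{i > 0 : −i does not lead to 0}. Then ℙ(μ = ∞) = ℙ(A₀⁻) = ∏_{j≥1}[1 − q_1 q_2 ⋯ q_j], where q_j = 1 − p_j, and for every n ≥ 0, ℙ(n < μ < ∞) = ∏_{k=1}^n (1 − q_1⋯q_k) · (1 − ∏_{m=n+1}^∞ (1 − q_1⋯q_m)). -/

import Mathlib

/-!
`-k` leads to `0` for every `1 ≤ k ≤ n` iff `η(-k) ≤ k` for every such `k`: the first edge out of
`-k` then lands at some `-k'` with `0 ≤ k' < k`, from which one descends to `0`. The events
`η(-k) ≤ k` depend on disjoint rows of the edge array, so they are independent, with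
`ℙ(η ≤ k) = 1 - q₁⋯q_k`. Continuity from above turns the finite products into the infinite one,
and `{n < μ < ∞} = {μ > n} \ {μ = ∞}`.
-/

open MeasureTheory ProbabilityTheory Filter

/-- Configuration: edge indicators. -/
abbrev Cfg := ℤ → ℤ → Bool

/-- There is an edge from `i` to `j`. -/
def Edge (ω : Cfg) (i j : ℤ) : Prop := i < j ∧ ω i j = true

/-- There is a directed path from `i` to `j`. -/
def Leads (ω : Cfg) : ℤ → ℤ → Prop := Relation.TransGen (Edge ω)

/-- A list of vertices forming a path inside `{a,...,b}`. -/
def IsPathIn (ω : Cfg) (a b : ℤ) (l : List ℤ) : Prop :=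
  l ≠ [] ∧ l.Chain' (Edge ω) ∧ ∀ x ∈ l, a ≤ x ∧ x ≤ b

/-- `L ω a b`: maximal number of edges of a path contained in `{a,...,b}`. -/
noncomputable def L (ω : Cfg) (a b : ℤ) : ℕ :=
  sSup {n | ∃ l : List ℤ, IsPathIn ω a b l ∧ l.length = n + 1}

/-- `T ω i j`: maximal number of edges of a path from `i` to `j` (0 if none). -/
noncomputable def T (ω : Cfg) (i j : ℤ) : ℕ :=
  sSup {n | ∃ l : List ℤ, l.Chain' (Edge ω) ∧ l.head? = some i ∧
    l.getLast? = some j ∧ l.length = n + 1}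

/-- The skeleton of the graph. -/
def Skel (ω : Cfg) : Set ℤ :=
  {n | (∀ j, n < j → Leads ω n j) ∧ (∀ j, j < n → Leads ω j n)}

/-- The model hypotheses: independent edges, edge `(i,j)` present w.p. `p (j-i)`. -/
def GraphModel (p : ℕ → ℝ) (μ : Measure Cfg) : Prop :=
  IsProbabilityMeasure μ ∧
  iIndepFun (m := fun _ : ℤ × ℤ => (inferInstance : MeasurableSpace Bool))
    (fun e ω => ω e.1 e.2) μ ∧
  (∀ i j : ℤ, i < j → μ {ω | ω i j = true} = ENNReal.ofReal (p (j - i).toNat)) ∧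
  (∀ i j : ℤ, j ≤ i → μ {ω | ω i j = true} = 0)

section Paths

variable {ω : Cfg}

theorem Leads.lt {a b : ℤ} (h : Leads ω a b) : a < b := by
  induction h with
  | single hab => exact hab.1
  | tail _ hbc ih => exact ih.trans hbc.1

theorem Leads.exists_edge_le {a b : ℤ} (h : Leads ω a b) : ∃ c, Edge ω a c ∧ c ≤ b := by
  obtain ⟨c, hac, hcb⟩ := Relation.TransGen.head'_iff.mp h
  refine ⟨c, hac, ?_⟩
  rcases Relation.reflTransGen_iff_eq_or_transGen.mp hcb with rfl | hcb
  · exact le_rfl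
  · exact (Leads.lt hcb).le

/-- The event `η(-k) ≤ k`. -/
def etaLe (k : ℕ) : Set Cfg := {ω | ∃ m ∈ Finset.Icc 1 k, ω (-k) (-k + m) = true}

theorem mem_etaLe_of_leads {k : ℕ} (h : Leads ω (-k) 0) : ω ∈ etaLe k := by
  obtain ⟨c, ⟨hkc, hedge⟩, hc⟩ := h.exists_edge_le
  refine ⟨(c + k).toNat, Finset.mem_Icc.2 ⟨by omega, by omega⟩, ?_⟩
  rwa [show -(k : ℤ) + ((c + k).toNat : ℤ) = c by omega]

theorem forall_leads_iff_forall_mem_etaLe (n : ℕ) :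
    (∀ k : ℕ, 1 ≤ k → k ≤ n → Leads ω (-k) 0) ↔ ∀ k : ℕ, 1 ≤ k → k ≤ n → ω ∈ etaLe k := by
  refine ⟨fun h k hk hkn => mem_etaLe_of_leads (h k hk hkn), fun h k => ?_⟩
  induction k using Nat.strong_induction_on with
  | _ k ih =>
    intro hk hkn
    obtain ⟨m, hm, hedge⟩ := h k hk hkn
    rw [Finset.mem_Icc] at hm
    have hkm : Edge ω (-k) (-k + m) := ⟨by omega, hedge⟩
    rcases hm.2.eq_or_lt with rfl | hmk
    · rw [neg_add_cancel] at hkm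
      exact .single hkm
    · rw [show -(k : ℤ) + m = -((k - m : ℕ) : ℤ) by omega] at hkm
      exact .head hkm (ih (k - m) (by omega) (by omega) (by omega))

theorem setOf_forall_leads_le_eq_biInter (n : ℕ) :
    {ω | ∀ k : ℕ, 1 ≤ k → k ≤ n → Leads ω (-k) 0} = ⋂ k ∈ Finset.Icc 1 n, etaLe k := by
  ext ω
  simp only [Set.mem_ofPred_eq, forall_leads_iff_forall_mem_etaLe, Set.mem_iInter, Finset.mem_Icc,
    and_imp]

theorem setOf_forall_leads_eq_iInter :
    {ω : Cfg | ∀ i : ℕ, 0 < i → Leads ω (-i) 0} = ⋂ n, ⋂ k ∈ Finset.Icc 1 n, etaLe k := by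
  simp only [← setOf_forall_leads_le_eq_biInter, Set.iInter_ofPred]
  ext ω
  exact ⟨fun h n k hk _ => h k hk, fun h i hi => h i i hi le_rfl⟩

theorem setOf_forall_leads_le_and_exists_not_leads (n : ℕ) :
    {ω | (∀ k : ℕ, 1 ≤ k → k ≤ n → Leads ω (-k) 0) ∧ ∃ m : ℕ, n < m ∧ ¬ Leads ω (-m) 0}
      = {ω | ∀ k : ℕ, 1 ≤ k → k ≤ n → Leads ω (-k) 0} \ {ω | ∀ i : ℕ, 0 < i → Leads ω (-i) 0} := by
  ext ω
  simp only [Set.mem_ofPred_eq, Set.mem_sdiff, not_forall, exists_prop]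
  refine and_congr_right fun h => ⟨fun ⟨m, hnm, hm⟩ => ⟨m, by omega, hm⟩, fun ⟨i, hi, hi'⟩ => ?_⟩
  exact ⟨i, not_le.mp fun hin => hi' (h i hi hin), hi'⟩

end Paths

theorem Finset.prod_Icc_one_eq_prod_range {M : Type*} [CommMonoid M] (f : ℕ → M) (n : ℕ) :
    ∏ k ∈ Finset.Icc 1 n, f k = ∏ j ∈ Finset.range n, f (j + 1) := by
  rw [← Finset.Ico_add_one_right_eq_Icc, Finset.prod_Ico_eq_prod_range, Nat.add_sub_cancel]
  simp only [add_comm 1]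

theorem Real.multipliable_of_nonneg_of_le_one {ι : Type*} {f : ι → ℝ} (h₀ : ∀ i, 0 ≤ f i)
    (h₁ : ∀ i, f i ≤ 1) : Multipliable f :=
  ⟨_, tendsto_atTop_ciInf (Finset.prod_anti_set_of_le_one h₀ h₁)
    ⟨0, by rintro _ ⟨s, rfl⟩; exact Finset.prod_nonneg fun i _ => h₀ i⟩⟩

/-- `ℙ(η ≤ k) = 1 - q₁⋯q_k`. -/
def etaCdf (p : ℕ → ℝ) (k : ℕ) : ℝ := 1 - ∏ m ∈ Finset.Icc 1 k, (1 - p m)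

section Measure

variable {p : ℕ → ℝ} {μ : Measure Cfg}

theorem etaCdf_nonneg (hp₀ : ∀ k, 0 ≤ p k) (hp₁ : ∀ k, p k ≤ 1) (k : ℕ) : 0 ≤ etaCdf p k := by
  have : ∏ m ∈ Finset.Icc 1 k, (1 - p m) ≤ 1 :=
    Finset.prod_le_one (fun m _ => by linarith [hp₁ m]) (fun m _ => by linarith [hp₀ m])
  unfold etaCdf; linarith

theorem etaCdf_le_one (hp₁ : ∀ k, p k ≤ 1) (k : ℕ) : etaCdf p k ≤ 1 := by
  have : 0 ≤ ∏ m ∈ Finset.Icc 1 k, (1 - p m) := Finset.prod_nonneg fun m _ => by linarith [hp₁ m]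
  unfold etaCdf; linarith

theorem tprod_etaCdf_succ_eq_prod_mul_tprod (hp₀ : ∀ k, 0 ≤ p k) (hp₁ : ∀ k, p k ≤ 1) (n : ℕ) :
    ∏' j, etaCdf p (j + 1)
      = (∏ k ∈ Finset.Icc 1 n, etaCdf p k) * ∏' m, etaCdf p (n + 1 + m) := by
  have htail : Multipliable fun j => etaCdf p (j + n + 1) :=
    Real.multipliable_of_nonneg_of_le_one (fun j => etaCdf_nonneg hp₀ hp₁ _)
      fun j => etaCdf_le_one hp₁ _
  rw [Finset.prod_Icc_one_eq_prod_range,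
    ← Multipliable.prod_mul_tprod_nat_mul' (f := fun j => etaCdf p (j + 1)) htail]
  exact congrArg _ (tprod_congr fun i => congrArg _ (by omega))

abbrev edgeSpace (S : Set (ℤ × ℤ)) : MeasurableSpace Cfg :=
  ⨆ e ∈ S, MeasurableSpace.comap (fun ω : Cfg => ω e.1 e.2) inferInstance

theorem measurable_edge (e : ℤ × ℤ) : Measurable fun ω : Cfg => ω e.1 e.2 := by
  fun_prop

theorem edgeSpace_le (S : Set (ℤ × ℤ)) : edgeSpace S ≤ MeasurableSpace.pi :=
  iSup₂_le fun e _ => (measurable_edge e).comap_le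

theorem measurableSet_edgeSpace_etaLe {S : Set (ℤ × ℤ)} {k : ℕ}
    (hS : ∀ e : ℤ × ℤ, e.1 = -k → e ∈ S) : MeasurableSet[edgeSpace S] (etaLe k) := by
  have : etaLe k = ⋃ m ∈ Finset.Icc 1 k, (fun ω : Cfg => ω (-k) (-k + m)) ⁻¹' {true} := by
    ext ω; simp [etaLe]
  rw [this]
  refine Finset.measurableSet_biUnion _ fun m _ => ?_
  exact le_iSup₂ (f := fun e (_ : e ∈ S) => MeasurableSpace.comap (fun ω : Cfg => ω e.1 e.2) _)
    (-(k : ℤ), -(k : ℤ) + m) (hS _ rfl) _ ⟨{true}, trivial, rfl⟩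

theorem measurableSet_etaLe (k : ℕ) : MeasurableSet (etaLe k) :=
  edgeSpace_le Set.univ _ (measurableSet_edgeSpace_etaLe fun _ _ => trivial)

namespace GraphModel

theorem indep_edgeSpace (hmodel : GraphModel p μ) {S T : Set (ℤ × ℤ)} (hST : Disjoint S T) :
    Indep (edgeSpace S) (edgeSpace T) μ :=
  indep_iSup_of_disjoint (fun e => (measurable_edge e).comap_le) hmodel.2.1.iIndep hST

theorem measure_biInter_etaLe (hmodel : GraphModel p μ) (s : Finset ℕ) :
    μ (⋂ k ∈ s, etaLe k) = ∏ k ∈ s, μ (etaLe k) := by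
  have : IsProbabilityMeasure μ := hmodel.1
  induction s using Finset.induction_on with
  | empty => simp
  | insert a s ha ih =>
    rw [Finset.set_biInter_insert, Finset.prod_insert ha, ← ih]
    refine (Indep_iff _ _ μ).1 (hmodel.indep_edgeSpace (S := {e | e.1 = -a})
      (T := {e | e.1 ≠ -a}) (Set.disjoint_left.2 fun _ h h' => h' h)) _ _
      (measurableSet_edgeSpace_etaLe fun _ h => h)
      (Finset.measurableSet_biInter _ fun k hk => measurableSet_edgeSpace_etaLe fun e he => ?_)
    simp only [Set.mem_ofPred_eq, he]
    exact fun hka => ha ((by omega : k = a) ▸ hk)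

theorem measure_edge_false (hmodel : GraphModel p μ) (hp₀ : ∀ k, 0 ≤ p k) {i j : ℤ} (hij : i < j) :
    μ {ω | ω i j = false} = ENNReal.ofReal (1 - p (j - i).toNat) := by
  have : IsProbabilityMeasure μ := hmodel.1
  have htrue : MeasurableSet {ω : Cfg | ω i j = true} :=
    measurable_edge (i, j) (measurableSet_singleton true)
  rw [show {ω : Cfg | ω i j = false} = {ω | ω i j = true}ᶜ by ext; simp,
    prob_compl_eq_one_sub htrue, hmodel.2.2.1 i j hij, ENNReal.ofReal_sub _ (hp₀ _),
    ENNReal.ofReal_one]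

theorem measure_etaLe (hmodel : GraphModel p μ) (hp₀ : ∀ k, 0 ≤ p k) (hp₁ : ∀ k, p k ≤ 1)
    (k : ℕ) : μ (etaLe k) = ENNReal.ofReal (etaCdf p k) := by
  have : IsProbabilityMeasure μ := hmodel.1
  have hrow := hmodel.2.1.precomp (g := fun m : ℕ => ((-k : ℤ), -(k : ℤ) + m))
    (fun a b hab => by simpa using congrArg Prod.snd hab)
  have hcompl : μ (etaLe k)ᶜ = ENNReal.ofReal (∏ m ∈ Finset.Icc 1 k, (1 - p m)) := by
    have : (etaLe k)ᶜ = ⋂ m ∈ Finset.Icc 1 k, (fun ω : Cfg => ω (-k) (-k + m)) ⁻¹' {false} := by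
      ext ω; simp [etaLe]
    rw [this, hrow.measure_inter_preimage_eq_mul _ fun _ _ => trivial,
      ENNReal.ofReal_prod_of_nonneg fun m _ => by linarith [hp₁ m]]
    refine Finset.prod_congr rfl fun m hm => ?_
    rw [Finset.mem_Icc] at hm
    have hedge := hmodel.measure_edge_false hp₀ (i := -k) (j := -k + m) (by omega)
    rwa [show (-(k : ℤ) + m - -k).toNat = m by omega] at hedge
  rw [← compl_compl (etaLe k), prob_compl_eq_one_sub (measurableSet_etaLe k).compl, hcompl,
    etaCdf, ENNReal.ofReal_sub _ (Finset.prod_nonneg fun m _ => by linarith [hp₁ m]),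
    ENNReal.ofReal_one]

theorem measureReal_biInter_etaLe (hmodel : GraphModel p μ) (hp₀ : ∀ k, 0 ≤ p k)
    (hp₁ : ∀ k, p k ≤ 1) (s : Finset ℕ) :
    μ.real (⋂ k ∈ s, etaLe k) = ∏ k ∈ s, etaCdf p k := by
  rw [measureReal_def, hmodel.measure_biInter_etaLe, ENNReal.toReal_prod]
  exact Finset.prod_congr rfl fun k _ => by
    rw [hmodel.measure_etaLe hp₀ hp₁, ENNReal.toReal_ofReal (etaCdf_nonneg hp₀ hp₁ k)]

theorem measureReal_iInter_biInter_etaLe (hmodel : GraphModel p μ) (hp₀ : ∀ k, 0 ≤ p k)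
    (hp₁ : ∀ k, p k ≤ 1) :
    μ.real (⋂ n, ⋂ k ∈ Finset.Icc 1 n, etaLe k) = ∏' j, etaCdf p (j + 1) := by
  have : IsProbabilityMeasure μ := hmodel.1
  have hanti : Antitone fun n => ⋂ k ∈ Finset.Icc 1 n, etaLe k := fun a b hab =>
    Set.biInter_mono (Finset.Icc_subset_Icc_right hab) fun _ _ => subset_rfl
  have hmeas := (ENNReal.tendsto_toReal (measure_ne_top μ _)).comp
    (tendsto_measure_iInter_atTop (fun n => (Finset.measurableSet_biInter _
      fun k _ => measurableSet_etaLe k).nullMeasurableSet) hanti ⟨0, measure_ne_top μ _⟩)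
  have hprod := (Real.multipliable_of_nonneg_of_le_one (fun j => etaCdf_nonneg hp₀ hp₁ (j + 1))
    fun j => etaCdf_le_one hp₁ (j + 1)).hasProd.tendsto_prod_nat
  refine tendsto_nhds_unique hmeas (hprod.congr fun n => ?_)
  rw [Function.comp_apply, Function.comp_apply, ← measureReal_def,
    hmodel.measureReal_biInter_etaLe hp₀ hp₁, Finset.prod_Icc_one_eq_prod_range]

end GraphModel

end Measure

/-- the law of `μ = inf{i > 0 : −i does not lead to 0}`. -/
theorem stmt_8 (p : ℕ → ℝ) (hp : ∀ k, 0 ≤ p k ∧ p k < 1)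
    (μ : Measure Cfg) (hmodel : GraphModel p μ) :
    (μ {ω | ∀ i : ℕ, 0 < i → Leads ω (-(i : ℤ)) 0}).toReal
      = ∏' j : ℕ, (1 - ∏ m ∈ Finset.Icc 1 (j + 1), (1 - p m)) ∧
    ∀ n : ℕ,
      (μ {ω | (∀ k : ℕ, 1 ≤ k → k ≤ n → Leads ω (-(k : ℤ)) 0) ∧
          ∃ m : ℕ, n < m ∧ ¬ Leads ω (-(m : ℤ)) 0}).toReal
        = (∏ k ∈ Finset.Icc 1 n, (1 - ∏ m ∈ Finset.Icc 1 k, (1 - p m))) *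
          (1 - ∏' m : ℕ, (1 - ∏ j ∈ Finset.Icc 1 (n + 1 + m), (1 - p j))) := by
  have : IsProbabilityMeasure μ := hmodel.1
  have hp₀ : ∀ k, 0 ≤ p k := fun k => (hp k).1
  have hp₁ : ∀ k, p k ≤ 1 := fun k => (hp k).2.le
  have hinf : μ.real {ω | ∀ i : ℕ, 0 < i → Leads ω (-(i : ℤ)) 0} = ∏' j, etaCdf p (j + 1) := by
    rw [setOf_forall_leads_eq_iInter, hmodel.measureReal_iInter_biInter_etaLe hp₀ hp₁]
  refine ⟨hinf, fun n => ?_⟩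
  have hsub : {ω : Cfg | ∀ i : ℕ, 0 < i → Leads ω (-(i : ℤ)) 0}
      ⊆ {ω | ∀ k : ℕ, 1 ≤ k → k ≤ n → Leads ω (-(k : ℤ)) 0} := fun ω h k hk _ => h k hk
  have hmeas : MeasurableSet {ω : Cfg | ∀ i : ℕ, 0 < i → Leads ω (-(i : ℤ)) 0} := by
    rw [setOf_forall_leads_eq_iInter]
    exact .iInter fun n => Finset.measurableSet_biInter _ fun k _ => measurableSet_etaLe k
  change μ.real _ = _
  rw [setOf_forall_leads_le_and_exists_not_leads, measureReal_sdiff hsub hmeas, hinf,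
    setOf_forall_leads_le_eq_biInter, hmodel.measureReal_biInter_etaLe hp₀ hp₁,
    tprod_etaCdf_succ_eq_prod_mul_tprod hp₀ hp₁ n, mul_one_sub]
  rfl
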